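/- Let v₁ = e₁, v₂ = e₂, v₃ = e₃ be the standard basis of ℝ³ and s⁽¹⁾, s⁽²⁾, s⁽³⁾ the standard skew-symmetric basis matrices. Define B_ℓ = Σ_{j=1}^{3} Σ_{i=0}^{3} (⊗^i v_j) ⊗ (s^{(ℓ)}v_j) ⊗ (⊗^{3-i} v_j) as 4-tensors on ℝ³. Then ⟨B_{ℓ₁}, B_{ℓ₂}⟩ = 8·δ_{ℓ₁ℓ₂} for ℓ₁, ℓ₂ ∈ {1,2,3}. -/
import Mathlib


open Matrix

/-- The standard skew-symmetric basis matrices `s⁽¹⁾, s⁽²⁾, s⁽³⁾`. -/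
def skewBasis : Fin 3 → Matrix (Fin 3) (Fin 3) ℝ :=
  ![!![0, 0, 0; 0, 0, -1; 0, 1, 0],
    !![0, 0, -1; 0, 0, 0; 1, 0, 0],
    !![0, -1, 0; 1, 0, 0; 0, 0, 0]]

/-- The standard basis vectors `e₁, e₂, e₃` of `ℝ³`. -/
def octaV : Fin 3 → Fin 3 → ℝ := fun t => fun a => if a = t then 1 else 0

/-- `B_ℓ = Σ_{j=1}^{3} Σ_{i=0}^{3} (⊗^i v_j) ⊗ (s⁽ℓ⁾v_j) ⊗ (⊗^{3-i} v_j)` as a 4-tensor. -/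
def octaB (ℓ : Fin 3) : (Fin 4 → Fin 3) → ℝ := fun j =>
  ∑ t : Fin 3, ∑ i : Fin 4, ∏ a : Fin 4,
    if a = i then ((skewBasis ℓ).mulVec (octaV t)) (j a) else octaV t (j a)

/-- Integer version of `skewBasis`. -/
def intSkew : Fin 3 → Matrix (Fin 3) (Fin 3) ℤ :=
  ![!![0, 0, 0; 0, 0, -1; 0, 1, 0],
    !![0, 0, -1; 0, 0, 0; 1, 0, 0],
    !![0, -1, 0; 1, 0, 0; 0, 0, 0]]

/-- Integer version of `octaV`. -/
def intV : Fin 3 → Fin 3 → ℤ := fun t => fun a => if a = t then 1 else 0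

/-- Integer version of `octaB`. -/
def intB (ℓ : Fin 3) : (Fin 4 → Fin 3) → ℤ := fun j =>
  ∑ t : Fin 3, ∑ i : Fin 4, ∏ a : Fin 4,
    if a = i then ((intSkew ℓ).mulVec (intV t)) (j a) else intV t (j a)

set_option maxHeartbeats 4000000 in
set_option maxRecDepth 100000 in
lemma intB_inner (ℓ₁ ℓ₂ : Fin 3) :
    ∑ j : Fin 4 → Fin 3, intB ℓ₁ j * intB ℓ₂ j = if ℓ₁ = ℓ₂ then 8 else 0 := by
  revert ℓ₁ ℓ₂; decide

lemma mulVec_cast (ℓ t : Fin 3) (a : Fin 3) :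
    ((skewBasis ℓ).mulVec (octaV t)) a = (((intSkew ℓ).mulVec (intV t)) a : ℤ) := by
  fin_cases ℓ <;> fin_cases t <;> fin_cases a <;>
    norm_num [skewBasis, intSkew, octaV, intV, mulVec, dotProduct, Fin.sum_univ_three]

lemma octaV_cast (t a : Fin 3) : octaV t a = ((intV t a : ℤ) : ℝ) := by
  simp [octaV, intV, apply_ite (Int.cast : ℤ → ℝ)]

lemma octaB_cast (ℓ : Fin 3) (j : Fin 4 → Fin 3) : octaB ℓ j = ((intB ℓ j : ℤ) : ℝ) := by
  unfold octaB intB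
  push_cast
  refine Finset.sum_congr rfl fun t _ => Finset.sum_congr rfl fun i _ =>
    Finset.prod_congr rfl fun a _ => ?_
  rw [mulVec_cast, octaV_cast]

/-- The tangent tensors of the octahedral embedding satisfy
`⟨B_{ℓ₁}, B_{ℓ₂}⟩ = 8·δ_{ℓ₁ℓ₂}`. -/
theorem octaB_inner (ℓ₁ ℓ₂ : Fin 3) :
    ∑ j : Fin 4 → Fin 3, octaB ℓ₁ j * octaB ℓ₂ j =
      if ℓ₁ = ℓ₂ then 8 else 0 := by
  have : ∑ j : Fin 4 → Fin 3, octaB ℓ₁ j * octaB ℓ₂ j =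
      ((∑ j : Fin 4 → Fin 3, intB ℓ₁ j * intB ℓ₂ j : ℤ) : ℝ) := by
    push_cast
    exact Finset.sum_congr rfl fun j _ => by rw [octaB_cast, octaB_cast]
  rw [this, intB_inner]
  split <;> norm_num
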